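/- (Corollary 3.6) For every Λ ∈ V₀, all subsets P ⊆ R ⊆ I₀ and every H ∈ V₀ one has Σ_{Q : P ⊆ Q ⊆ R} (−1)^{b̂_{P,Q}^{Λ}} θ̂_{P,Q}^{Λ}(H) τ_Q^R(H) = d_{Δ_P^R}(Λ), where d_{Δ_P^R}(Λ) = 1 if ⟨λ_{P,i}, Λ⟩ > 0 for every i ∈ R∖P and d_{Δ_P^R}(Λ) = 0 otherwise. -/

import Mathlib

open scoped Classical

noncomputable section

local notation "⟪" x ", " y "⟫" => @inner ℝ _ _ x y

variable {V : Type*} [NormedAddCommGroup V] [InnerProductSpace ℝ V] [FiniteDimensional ℝ V]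
variable {I : Type*} [Fintype I] [DecidableEq I]

/-- `lamProj lam P i` is the orthogonal projection `λ_{P,i}` of `λ_i` onto the orthogonal
complement of the span of `{λ_j : j ∈ P}`. -/
noncomputable def lamProj (lam : I → V) (P : Finset I) (i : I) : V :=
  (Submodule.orthogonalProjectionOnto ((Submodule.span ℝ (lam '' ↑P))ᗮ) (lam i) : V)

/-- `mu P Q i` (for `i ∈ Q \ P`) is the dual basis `μ_{P,i}^Q` of the basis
`Δ_P^Q = (λ_{P,i})_{i ∈ Q\P}` of the subspace `V_P^Q` it spans:  it is characterized by
membership in `V_P^Q` together with `⟪μ_{P,i}^Q, λ_{P,j}⟫ = δ_{ij}`. -/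
def IsDualSystem (lam : I → V) (mu : Finset I → Finset I → I → V) : Prop :=
  ∀ P Q : Finset I, P ⊆ Q → ∀ i ∈ Q \ P,
    mu P Q i ∈ Submodule.span ℝ (lamProj lam P '' ↑(Q \ P)) ∧
      ∀ j ∈ Q \ P, ⟪mu P Q i, lamProj lam P j⟫ = if i = j then 1 else 0

/-- The characteristic function `θ_{P,Q}^Λ`. -/
noncomputable def theta (lam : I → V) (mu : Finset I → Finset I → I → V) (Λ : V)
    (P Q : Finset I) (H : V) : ℤ :=
  if P ⊆ Q ∧ ∀ i ∈ Q \ P,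
      (0 < ⟪mu P Q i, Λ⟫ → ⟪lamProj lam P i, H⟫ ≤ 0) ∧
      (⟪mu P Q i, Λ⟫ ≤ 0 → 0 < ⟪lamProj lam P i, H⟫)
  then 1 else 0

/-- The characteristic function `θ̂_{P,Q}^Λ`. -/
noncomputable def thetaHat (lam : I → V) (mu : Finset I → Finset I → I → V) (Λ : V)
    (P Q : Finset I) (H : V) : ℤ :=
  if P ⊆ Q ∧ ∀ i ∈ Q \ P,
      (0 < ⟪lamProj lam P i, Λ⟫ → ⟪mu P Q i, H⟫ ≤ 0) ∧
      (⟪lamProj lam P i, Λ⟫ ≤ 0 → 0 < ⟪mu P Q i, H⟫)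
  then 1 else 0

/-- `b_{P,Q}^Λ`, the number of `i ∈ Q \ P` with `⟪μ_{P,i}^Q, Λ⟫ ≤ 0`. -/
noncomputable def bcard (mu : Finset I → Finset I → I → V) (Λ : V) (P Q : Finset I) : ℕ :=
  ((Q \ P).filter fun i => ⟪mu P Q i, Λ⟫ ≤ 0).card

/-- `b̂_{P,Q}^Λ`, the number of `i ∈ Q \ P` with `⟪λ_{P,i}, Λ⟫ ≤ 0`. -/
noncomputable def bhatcard (lam : I → V) (Λ : V) (P Q : Finset I) : ℕ :=
  ((Q \ P).filter fun i => ⟪lamProj lam P i, Λ⟫ ≤ 0).card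

/-- `η_{P,Q}^Λ = |P| + b_{P,Q}^Λ`. -/
noncomputable def eta (mu : Finset I → Finset I → I → V) (Λ : V) (P Q : Finset I) : ℕ :=
  P.card + bcard mu Λ P Q

/-- `η̂_{P,Q}^Λ = |P| + b̂_{P,Q}^Λ`. -/
noncomputable def etaHat (lam : I → V) (Λ : V) (P Q : Finset I) : ℕ :=
  P.card + bhatcard lam Λ P Q

/-- `P_Λ^Q = P ∪ {i ∈ Q\P : ⟪μ_{P,i}^Q, Λ⟫ ≤ 0}`. -/
noncomputable def PLam (mu : Finset I → Finset I → I → V) (Λ : V) (P Q : Finset I) : Finset I :=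
  P ∪ (Q \ P).filter fun i => ⟪mu P Q i, Λ⟫ ≤ 0

/-- `Q_P^Λ = P ∪ {i ∈ Q\P : ⟪λ_{P,i}, Λ⟫ > 0}`. -/
noncomputable def QLam (lam : I → V) (Λ : V) (P Q : Finset I) : Finset I :=
  P ∪ (Q \ P).filter fun i => 0 < ⟪lamProj lam P i, Λ⟫

/-- The basis is obtuse if `⟪λ_i, λ_j⟫ ≤ 0` for `i ≠ j`. -/
def Obtuse (lam : I → V) : Prop := ∀ i j : I, i ≠ j → ⟪lam i, lam j⟫ ≤ 0

section Aux
set_option linter.unusedSectionVars false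

lemma lamProj_mem_orthogonal (lam : I → V) (P : Finset I) (i : I) :
    lamProj lam P i ∈ (Submodule.span ℝ (lam '' ↑P))ᗮ := by
  rw [lamProj]; exact SetLike.coe_mem _

lemma sub_lamProj_mem (lam : I → V) (P : Finset I) (i : I) :
    lam i - lamProj lam P i ∈ Submodule.span ℝ (lam '' ↑P) := by
  have h := Submodule.sub_starProjection_mem_orthogonal
    (K := (Submodule.span ℝ (lam '' (↑P : Set I)))ᗮ) (lam i)
  rwa [Submodule.orthogonal_orthogonal] at h

lemma lamProj_mem_span (lam : I → V) {P Q : Finset I} (hPQ : P ⊆ Q) {j : I} (hj : j ∈ Q) :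
    lamProj lam P j ∈ Submodule.span ℝ (lam '' ↑Q) := by
  have h1 : lam j ∈ Submodule.span ℝ (lam '' (↑Q : Set I)) :=
    Submodule.subset_span ⟨j, hj, rfl⟩
  have h2 : lam j - lamProj lam P j ∈ Submodule.span ℝ (lam '' (↑Q : Set I)) :=
    Submodule.span_mono (Set.image_mono hPQ) (sub_lamProj_mem lam P j)
  simpa using Submodule.sub_mem _ h1 h2

lemma span_lamProj_le_orthogonal (lam : I → V) (P : Finset I) (s : Set I) :
    Submodule.span ℝ (lamProj lam P '' s) ≤ (Submodule.span ℝ (lam '' ↑P))ᗮ := by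
  rw [Submodule.span_le]
  rintro x ⟨k, -, rfl⟩
  exact lamProj_mem_orthogonal lam P k

/-- if `v` is orthogonal to all generators, it is orthogonal to the span. -/
lemma inner_eq_zero_of_mem_span {s : Set V} {x v : V} (hx : x ∈ Submodule.span ℝ s)
    (h : ∀ y ∈ s, ⟪y, v⟫ = 0) : ⟪x, v⟫ = 0 := by
  induction hx using Submodule.span_induction with
  | mem y hy => exact h y hy
  | zero => simp
  | add y z _ _ hy hz => rw [inner_add_left, hy, hz, add_zero]
  | smul a y _ hy => rw [real_inner_smul_left, hy, mul_zero]

lemma eq_of_mem_span_inner {f : I → V} {T : Finset I} {x y : V}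
    (hx : x ∈ Submodule.span ℝ (f '' ↑T)) (hy : y ∈ Submodule.span ℝ (f '' ↑T))
    (h : ∀ j ∈ T, ⟪x, f j⟫ = ⟪y, f j⟫) : x = y := by
  have hsub : x - y ∈ Submodule.span ℝ (f '' (↑T : Set I)) := Submodule.sub_mem _ hx hy
  have hz : ⟪x - y, x - y⟫ = 0 := by
    refine inner_eq_zero_of_mem_span hsub ?_
    rintro z ⟨j, hj, rfl⟩
    have h1 : ⟪f j, x⟫ = ⟪f j, y⟫ := by
      rw [real_inner_comm, h j hj, real_inner_comm]
    rw [inner_sub_right, h1, sub_self]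
  exact sub_eq_zero.1 (inner_self_eq_zero.1 hz)
/-- Tower property: the projection relative to a larger `Q` differs from the one
relative to `P ⊆ Q` by an element of the span of the intermediate projected vectors. -/
lemma lamProj_tower (lam : I → V) {P Q : Finset I} (hPQ : P ⊆ Q) (j : I) :
    ∃ w ∈ Submodule.span ℝ (lamProj lam P '' ↑(Q \ P)),
      lamProj lam Q j = lamProj lam P j - w := by
  set W := Submodule.span ℝ (lamProj lam P '' (↑(Q \ P) : Set I)) with hW
  set K := Submodule.span ℝ (lam '' (↑Q : Set I)) with hK
  have hWP : W ≤ (Submodule.span ℝ (lam '' (↑P : Set I)))ᗮ :=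
    span_lamProj_le_orthogonal lam P _
  have hWK : W ≤ K := by
    rw [hW, Submodule.span_le]
    rintro x ⟨k, hk, rfl⟩
    exact lamProj_mem_span lam hPQ (Finset.mem_sdiff.1 (by exact_mod_cast hk)).1
  refine ⟨(Submodule.orthogonalProjectionOnto W (lamProj lam P j) : V), SetLike.coe_mem _, ?_⟩
  have hv : lamProj lam P j - (Submodule.orthogonalProjectionOnto W (lamProj lam P j) : V) ∈ Kᗮ := by
    rw [Submodule.mem_orthogonal]
    intro u hu
    refine inner_eq_zero_of_mem_span hu ?_
    rintro z ⟨q, hq, rfl⟩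
    by_cases hqP : q ∈ P
    · -- lam q ∈ span (lam '' P), and the difference is orthogonal to that span
      have hmemP : lam q ∈ Submodule.span ℝ (lam '' (↑P : Set I)) :=
        Submodule.subset_span ⟨q, hqP, rfl⟩
      have hdiff : lamProj lam P j - (Submodule.orthogonalProjectionOnto W (lamProj lam P j) : V) ∈
          (Submodule.span ℝ (lam '' (↑P : Set I)))ᗮ :=
        Submodule.sub_mem _ (lamProj_mem_orthogonal lam P j) (hWP (SetLike.coe_mem _))
      have := (Submodule.mem_orthogonal _ _).1 hdiff (lam q) hmemP
      exact this
    · -- q ∈ Q \ P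
      have hq' : q ∈ Q := by exact_mod_cast hq
      have hqQP : q ∈ Q \ P := Finset.mem_sdiff.2 ⟨hq', hqP⟩
      have h1 : lam q - lamProj lam P q ∈ Submodule.span ℝ (lam '' (↑P : Set I)) :=
        sub_lamProj_mem lam P q
      have hdiffW : lamProj lam P j - (Submodule.orthogonalProjectionOnto W (lamProj lam P j) : V) ∈ Wᗮ :=
        Submodule.sub_starProjection_mem_orthogonal _
      have hdiffP : lamProj lam P j - (Submodule.orthogonalProjectionOnto W (lamProj lam P j) : V) ∈
          (Submodule.span ℝ (lam '' (↑P : Set I)))ᗮ :=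
        Submodule.sub_mem _ (lamProj_mem_orthogonal lam P j) (hWP (SetLike.coe_mem _))
      have heqP : ⟪lam q - lamProj lam P q,
          lamProj lam P j - (Submodule.orthogonalProjectionOnto W (lamProj lam P j) : V)⟫ = 0 :=
        (Submodule.mem_orthogonal _ _).1 hdiffP _ h1
      have heqW : ⟪lamProj lam P q,
          lamProj lam P j - (Submodule.orthogonalProjectionOnto W (lamProj lam P j) : V)⟫ = 0 :=
        (Submodule.mem_orthogonal _ _).1 hdiffW _
          (Submodule.subset_span ⟨q, by exact_mod_cast hqQP, rfl⟩)
      have : ⟪lam q, lamProj lam P j - (Submodule.orthogonalProjectionOnto W (lamProj lam P j) : V)⟫ = 0 := by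
        have hsplit : lam q = (lam q - lamProj lam P q) + lamProj lam P q := by abel
        rw [hsplit, inner_add_left, heqP, heqW, add_zero]
      exact this
  have hvo : lam j - (lamProj lam P j - (Submodule.orthogonalProjectionOnto W (lamProj lam P j) : V)) ∈
      Kᗮᗮ := by
    rw [Submodule.orthogonal_orthogonal]
    have h1 : lam j - lamProj lam P j ∈ K :=
      Submodule.span_mono (Set.image_mono hPQ) (sub_lamProj_mem lam P j)
    have h2 : (Submodule.orthogonalProjectionOnto W (lamProj lam P j) : V) ∈ K := hWK (SetLike.coe_mem _)
    have : lam j - (lamProj lam P j - (Submodule.orthogonalProjectionOnto W (lamProj lam P j) : V)) =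
        (lam j - lamProj lam P j) + (Submodule.orthogonalProjectionOnto W (lamProj lam P j) : V) := by abel
    rw [this]
    exact Submodule.add_mem _ h1 h2
  rw [lamProj]
  exact Submodule.eq_starProjection_of_mem_orthogonal hv hvo
lemma inner_right_of_mem_orthogonal' {K : Submodule ℝ V} {x v : V}
    (hx : x ∈ K) (hv : v ∈ Kᗮ) : ⟪v, x⟫ = 0 := by
  rw [real_inner_comm]; exact (Submodule.mem_orthogonal K v).1 hv x hx

/-- Key uniqueness fact: the dual vectors do not change when one index is moved from `Q\P`
into the base set `P`. -/
lemma mu_insert (b : Module.Basis I ℝ V) (mu : Finset I → Finset I → I → V)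
    (hmu : IsDualSystem (⇑b) mu) {P Q : Finset I}
    (hPQ : P ⊆ Q) {s : I} (hsQ : s ∈ Q) (hsP : s ∉ P) {i : I} (hi : i ∈ Q \ insert s P) :
    mu (insert s P) Q i = mu P Q i := by
  set P' := insert s P with hP'
  have hP'Q : P' ⊆ Q := Finset.insert_subset hsQ hPQ
  have hPP' : P ⊆ P' := Finset.subset_insert s P
  obtain ⟨hiQ, hiP'⟩ := Finset.mem_sdiff.1 hi
  have hiP : i ∈ Q \ P := Finset.mem_sdiff.2 ⟨hiQ, fun h => hiP' (Finset.mem_insert_of_mem h)⟩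
  have his : i ≠ s := fun h => hiP' (h ▸ Finset.mem_insert_self s P)
  have hsubPP : (↑(P' \ P) : Set I) ⊆ (↑(Q \ P) : Set I) := by
    intro t ht
    have ht' : t ∈ P' \ P := by exact_mod_cast ht
    obtain ⟨htP', htP⟩ := Finset.mem_sdiff.1 ht'
    have : t = s := by
      rcases Finset.mem_insert.1 htP' with h | h
      · exact h
      · exact absurd h htP
    subst this
    exact_mod_cast Finset.mem_sdiff.2 ⟨hsQ, hsP⟩
  have hspan : Submodule.span ℝ (lamProj (⇑b) P' '' ↑(Q \ P')) ≤
      Submodule.span ℝ (lamProj (⇑b) P '' ↑(Q \ P)) := by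
    rw [Submodule.span_le]
    rintro x ⟨k, hk, rfl⟩
    have hk' : k ∈ Q \ P' := by exact_mod_cast hk
    obtain ⟨hkQ, hkP'⟩ := Finset.mem_sdiff.1 hk'
    have hkQP : k ∈ Q \ P :=
      Finset.mem_sdiff.2 ⟨hkQ, fun h => hkP' (Finset.mem_insert_of_mem h)⟩
    obtain ⟨w, hw, hwe⟩ := lamProj_tower (⇑b) hPP' k
    have hw' : w ∈ Submodule.span ℝ (lamProj (⇑b) P '' ↑(Q \ P)) :=
      Submodule.span_mono (Set.image_mono hsubPP) hw
    have hmem : lamProj (⇑b) P k ∈ Submodule.span ℝ (lamProj (⇑b) P '' (↑(Q \ P) : Set I)) :=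
      Submodule.subset_span ⟨k, by exact_mod_cast hkQP, rfl⟩
    rw [hwe]
    exact Submodule.sub_mem _ hmem hw'
  have hmuo : mu P' Q i ∈ (Submodule.span ℝ (⇑b '' (↑P' : Set I)))ᗮ :=
    span_lamProj_le_orthogonal (⇑b) P' _ ((hmu P' Q hP'Q i hi).1)
  refine eq_of_mem_span_inner (f := lamProj (⇑b) P) (T := Q \ P)
    (hspan (hmu P' Q hP'Q i hi).1) (hmu P Q hPQ i hiP).1 ?_
  intro j hj
  obtain ⟨hjQ, hjP⟩ := Finset.mem_sdiff.1 hj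
  rw [(hmu P Q hPQ i hiP).2 j hj]
  by_cases hjs : j = s
  · subst hjs
    have hes : lamProj (⇑b) P j ∈ Submodule.span ℝ (⇑b '' (↑P' : Set I)) :=
      lamProj_mem_span (⇑b) hPP' (Finset.mem_insert_self _ _)
    rw [inner_right_of_mem_orthogonal' hes hmuo, if_neg his]
  · have hjP' : j ∈ Q \ P' := Finset.mem_sdiff.2 ⟨hjQ, by
      intro h
      rcases Finset.mem_insert.1 h with h' | h'
      · exact hjs h'
      · exact hjP h'⟩
    obtain ⟨w, hw, hwe⟩ := lamProj_tower (⇑b) hPP' j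
    have hwP' : w ∈ Submodule.span ℝ (⇑b '' (↑P' : Set I)) := by
      have : Submodule.span ℝ (lamProj (⇑b) P '' (↑(P' \ P) : Set I)) ≤
          Submodule.span ℝ (⇑b '' (↑P' : Set I)) := by
        rw [Submodule.span_le]
        rintro x ⟨t, ht, rfl⟩
        have ht' : t ∈ P' \ P := by exact_mod_cast ht
        exact lamProj_mem_span (⇑b) hPP' (Finset.mem_sdiff.1 ht').1
      exact this hw
    have hej : lamProj (⇑b) P j = lamProj (⇑b) P' j + w := by rw [hwe]; abel
    rw [hej, inner_add_right, (hmu P' Q hP'Q i hi).2 j hjP',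
      inner_right_of_mem_orthogonal' hwP' hmuo, add_zero]
lemma span_lamProj_le_span (lam : I → V) {P Q : Finset I} (hPQ : P ⊆ Q) :
    Submodule.span ℝ (lamProj lam P '' ↑(Q \ P)) ≤ Submodule.span ℝ (lam '' ↑Q) := by
  rw [Submodule.span_le]
  rintro x ⟨k, hk, rfl⟩
  exact lamProj_mem_span lam hPQ (Finset.mem_sdiff.1 (by exact_mod_cast hk)).1

/-- evaluation of `⟪λ_{Q,i}, H⟫` through a decomposition `H = p + v` adapted to `Q\P`. -/
lemma bridge_tau (b : Module.Basis I ℝ V) {P Q : Finset I} (hPQ : P ⊆ Q) (i : I)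
    {p v H : V} (hH : H = p + v)
    (hp : p ∈ Submodule.span ℝ (lamProj (⇑b) P '' ↑(Q \ P)))
    (hv : ∀ a ∈ Q \ P, ⟪lamProj (⇑b) P a, v⟫ = 0) :
    ⟪lamProj (⇑b) Q i, H⟫ = ⟪lamProj (⇑b) P i, v⟫ := by
  obtain ⟨w, hw, hwe⟩ := lamProj_tower (⇑b) hPQ i
  have hpQ : p ∈ Submodule.span ℝ (⇑b '' (↑Q : Set I)) := span_lamProj_le_span (⇑b) hPQ hp
  have h1 : ⟪lamProj (⇑b) Q i, p⟫ = 0 :=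
    inner_right_of_mem_orthogonal' hpQ (lamProj_mem_orthogonal (⇑b) Q i)
  have h2 : ⟪w, v⟫ = 0 := by
    refine inner_eq_zero_of_mem_span hw ?_
    rintro y ⟨a, ha, rfl⟩
    exact hv a (by exact_mod_cast ha)
  rw [hH, inner_add_right, h1, zero_add, hwe, inner_sub_left, h2, sub_zero]

lemma bridge_mu (b : Module.Basis I ℝ V) (mu : Finset I → Finset I → I → V)
    (hmu : IsDualSystem (⇑b) mu) {P Q : Finset I} (hPQ : P ⊆ Q) {a : I} (ha : a ∈ Q \ P)
    {p v H : V} (hH : H = p + v)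
    (hv : ∀ t ∈ Q \ P, ⟪lamProj (⇑b) P t, v⟫ = 0) :
    ⟪mu P Q a, H⟫ = ⟪mu P Q a, p⟫ := by
  have h2 : ⟪mu P Q a, v⟫ = 0 := by
    refine inner_eq_zero_of_mem_span (hmu P Q hPQ a ha).1 ?_
    rintro y ⟨t, ht, rfl⟩
    exact hv t (by exact_mod_cast ht)
  rw [hH, inner_add_right, h2, add_zero]

/-- coordinates of an element of `V_P^Q` are read off by pairing with the dual vectors. -/
lemma coords_eq_inner_mu (b : Module.Basis I ℝ V) (mu : Finset I → Finset I → I → V)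
    (hmu : IsDualSystem (⇑b) mu) {P Q : Finset I} (hPQ : P ⊆ Q) {p : V}
    (hp : p ∈ Submodule.span ℝ (lamProj (⇑b) P '' ↑(Q \ P))) :
    ∃ d : I → ℝ, p = ∑ i ∈ Q \ P, d i • lamProj (⇑b) P i ∧
      ∀ a ∈ Q \ P, d a = ⟪mu P Q a, p⟫ := by
  rw [Finsupp.mem_span_image_iff_linearCombination] at hp
  obtain ⟨l, hlsupp, hlp⟩ := hp
  have hsupp : l.support ⊆ Q \ P := by
    intro t ht
    exact_mod_cast (Finsupp.mem_supported ℝ l).1 hlsupp ht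
  have hrep : p = ∑ i ∈ Q \ P, l i • lamProj (⇑b) P i := by
    rw [← hlp, Finsupp.linearCombination_apply]
    exact Finsupp.sum_of_support_subset l hsupp (fun i a => a • lamProj (⇑b) P i)
      (fun i _ => zero_smul ℝ _)
  refine ⟨fun i => l i, hrep, ?_⟩
  intro a ha
  rw [hrep, inner_sum]
  have hterm : ∀ i ∈ Q \ P, ⟪mu P Q a, l i • lamProj (⇑b) P i⟫
      = if a = i then l i else 0 := by
    intro i hi
    rw [real_inner_smul_right, (hmu P Q hPQ a ha).2 i hi]
    by_cases h : a = i <;> simp [h]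
  rw [Finset.sum_congr rfl hterm, Finset.sum_ite_eq (Q \ P) a (fun i => l i), if_pos ha]

/-- linear independence of the projected family. -/
lemma lamProj_indep (b : Module.Basis I ℝ V) {P N : Finset I} (hNP : ∀ i ∈ N, i ∉ P)
    (c : { x // x ∈ N } → ℝ)
    (h0 : ∑ i : { x // x ∈ N }, c i • lamProj (⇑b) P ↑i = 0) : c = 0 := by
  set x : V := ∑ i : { x // x ∈ N }, c i • b ↑i with hx
  have hxe : x = ∑ i : { x // x ∈ N }, c i • (b ↑i - lamProj (⇑b) P ↑i) := by
    have : ∑ i : { x // x ∈ N }, c i • (b ↑i - lamProj (⇑b) P ↑i)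
        = x - ∑ i : { x // x ∈ N }, c i • lamProj (⇑b) P ↑i := by
      rw [hx, ← Finset.sum_sub_distrib]
      exact Finset.sum_congr rfl fun i _ => smul_sub _ _ _
    rw [this, h0, sub_zero]
  have hxP : x ∈ Submodule.span ℝ (⇑b '' (↑P : Set I)) := by
    rw [hxe]
    exact Submodule.sum_mem _ fun i _ => Submodule.smul_mem _ _ (sub_lamProj_mem (⇑b) P ↑i)
  have hsupp := b.mem_span_image.1 hxP
  funext i₀
  have hval : (b.repr x) ↑i₀ = c i₀ := by
    rw [hx, map_sum]
    have : ∀ i : { x // x ∈ N }, (b.repr (c i • b ↑i)) ↑i₀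
        = if (i : I) = ↑i₀ then c i else 0 := by
      intro i
      rw [map_smul, Finsupp.smul_apply, Module.Basis.repr_self, Finsupp.single_apply]
      by_cases h : (i : I) = ↑i₀ <;> simp [h]
    rw [Finsupp.finset_sum_apply, Finset.sum_congr rfl fun i _ => this i]
    rw [Finset.sum_eq_single i₀ (fun j _ hj => if_neg fun h => hj (Subtype.ext h))
      (fun h => absurd (Finset.mem_univ i₀) h)]
    exact if_pos rfl
  have hni : (↑i₀ : I) ∉ (b.repr x).support := fun hmem => hNP ↑i₀ i₀.2 (hsupp hmem)
  rw [Finsupp.notMem_support_iff.1 hni] at hval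
  simpa using hval.symm
/-- The Langlands condition on `Q`. -/
def GoodQ (b : Module.Basis I ℝ V) (mu : Finset I → Finset I → I → V) (P R : Finset I) (H : V)
    (Q : Finset I) : Prop :=
  P ⊆ Q ∧ Q ⊆ R ∧ (∀ i ∈ Q \ P, ⟪mu P Q i, H⟫ ≤ 0) ∧
    ∀ i ∈ R \ Q, 0 < ⟪lamProj (⇑b) Q i, H⟫

lemma goodQ_unique (b : Module.Basis I ℝ V) (mu : Finset I → Finset I → I → V)
    (hmu : IsDualSystem (⇑b) mu) {P R : Finset I} (H : V) {Q₁ Q₂ : Finset I}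
    (h1 : GoodQ b mu P R H Q₁) (h2 : GoodQ b mu P R H Q₂) : Q₁ = Q₂ := by
  obtain ⟨hPQ₁, hQR₁, hmu₁, htau₁⟩ := h1
  obtain ⟨hPQ₂, hQR₂, hmu₂, htau₂⟩ := h2
  -- decompositions adapted to each Q
  have main : ∀ Q : Finset I, P ⊆ Q → Q ⊆ R →
      (∀ i ∈ Q \ P, ⟪mu P Q i, H⟫ ≤ 0) → (∀ i ∈ R \ Q, 0 < ⟪lamProj (⇑b) Q i, H⟫) →
      ∃ p v : V, H = p + v ∧
        p ∈ Submodule.span ℝ (lamProj (⇑b) P '' ↑(Q \ P)) ∧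
        (∀ a ∈ Q \ P, ⟪lamProj (⇑b) P a, v⟫ = 0) ∧
        (∀ i ∈ R \ Q, 0 < ⟪lamProj (⇑b) P i, v⟫) ∧
        (∃ d : I → ℝ, p = ∑ i ∈ Q \ P, d i • lamProj (⇑b) P i ∧ ∀ a ∈ Q \ P, d a ≤ 0) := by
    intro Q hPQ hQR hmuQ htauQ
    set W := Submodule.span ℝ (lamProj (⇑b) P '' (↑(Q \ P) : Set I)) with hW
    set p : V := ↑(Submodule.orthogonalProjectionOnto W H) with hp
    set v : V := H - p with hv
    have hHpv : H = p + v := by rw [hv]; abel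
    have hvW : v ∈ Wᗮ := Submodule.sub_starProjection_mem_orthogonal H
    have hvorth : ∀ a ∈ Q \ P, ⟪lamProj (⇑b) P a, v⟫ = 0 := by
      intro a ha
      exact (Submodule.mem_orthogonal W v).1 hvW _
        (Submodule.subset_span ⟨a, by exact_mod_cast ha, rfl⟩)
    have hpW : p ∈ W := SetLike.coe_mem _
    refine ⟨p, v, hHpv, hpW, hvorth, ?_, ?_⟩
    · intro i hi
      have := bridge_tau b hPQ i hHpv hpW hvorth
      rw [← this]
      exact htauQ i hi
    · obtain ⟨d, hd1, hd2⟩ := coords_eq_inner_mu b mu hmu hPQ hpW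
      refine ⟨d, hd1, ?_⟩
      intro a ha
      rw [hd2 a ha, ← bridge_mu b mu hmu hPQ ha hHpv hvorth]
      exact hmuQ a ha
  obtain ⟨p₁, v₁, hH₁, hp₁, hv₁, hpos₁, d₁, hd₁, hdneg₁⟩ :=
    main Q₁ hPQ₁ hQR₁ hmu₁ htau₁
  obtain ⟨p₂, v₂, hH₂, hp₂, hv₂, hpos₂, d₂, hd₂, hdneg₂⟩ :=
    main Q₂ hPQ₂ hQR₂ hmu₂ htau₂
  -- cross inequalities
  have cross : ∀ (pk : V) (dk : I → ℝ) (Qk Qj : Finset I), P ⊆ Qk → Qk ⊆ R → P ⊆ Qj → Qj ⊆ R →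
      (pk = ∑ i ∈ Qk \ P, dk i • lamProj (⇑b) P i) → (∀ a ∈ Qk \ P, dk a ≤ 0) →
      ∀ vj : V, (∀ a ∈ Qj \ P, ⟪lamProj (⇑b) P a, vj⟫ = 0) →
      (∀ i ∈ R \ Qj, 0 < ⟪lamProj (⇑b) P i, vj⟫) → ⟪vj, pk⟫ ≤ 0 := by
    intro pk dk Qk Qj hPQk hQkR hPQj hQjR hrep hneg vj hvj hposj
    rw [hrep, inner_sum]
    refine Finset.sum_nonpos ?_
    intro i hi
    rw [real_inner_smul_right]
    have hiR : i ∈ R := hQkR (Finset.mem_sdiff.1 hi).1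
    have hiP : i ∉ P := (Finset.mem_sdiff.1 hi).2
    have hge : 0 ≤ ⟪vj, lamProj (⇑b) P i⟫ := by
      rw [real_inner_comm]
      by_cases hij : i ∈ Qj
      · have : i ∈ Qj \ P := Finset.mem_sdiff.2 ⟨hij, hiP⟩
        rw [hvj i this]
      · exact le_of_lt (hposj i (Finset.mem_sdiff.2 ⟨hiR, hij⟩))
    exact mul_nonpos_of_nonpos_of_nonneg (hneg i hi) hge
  have hcross12 : ⟪v₁, p₂⟫ ≤ 0 :=
    cross p₂ d₂ Q₂ Q₁ hPQ₂ hQR₂ hPQ₁ hQR₁ hd₂ hdneg₂ v₁ hv₁ hpos₁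
  have hcross21 : ⟪v₂, p₁⟫ ≤ 0 :=
    cross p₁ d₁ Q₁ Q₂ hPQ₁ hQR₁ hPQ₂ hQR₂ hd₁ hdneg₁ v₂ hv₂ hpos₂
  have hself : ∀ (p v : V), p ∈ Submodule.span ℝ (lamProj (⇑b) P '' ↑(Q₁ \ P)) ∨
      p ∈ Submodule.span ℝ (lamProj (⇑b) P '' ↑(Q₂ \ P)) → True := fun _ _ _ => trivial
  have hself₁ : ⟪v₁, p₁⟫ = 0 := by
    rw [real_inner_comm]
    refine inner_eq_zero_of_mem_span hp₁ ?_
    rintro y ⟨a, ha, rfl⟩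
    exact hv₁ a (by exact_mod_cast ha)
  have hself₂ : ⟪v₂, p₂⟫ = 0 := by
    rw [real_inner_comm]
    refine inner_eq_zero_of_mem_span hp₂ ?_
    rintro y ⟨a, ha, rfl⟩
    exact hv₂ a (by exact_mod_cast ha)
  have hpp : p₁ - p₂ = v₂ - v₁ := by
    have := hH₁.symm.trans hH₂
    linear_combination (norm := abel1) this  -- p₁ + v₁ = p₂ + v₂
  have hkey : ⟪p₁ - p₂, p₁ - p₂⟫ ≤ 0 := by
    nth_rewrite 1 [hpp]
    rw [inner_sub_left, inner_sub_right, inner_sub_right]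
    linarith
  have hp12 : p₁ = p₂ := by
    have h0 : ⟪p₁ - p₂, p₁ - p₂⟫ = 0 :=
      le_antisymm hkey (real_inner_self_nonneg)
    exact sub_eq_zero.1 (inner_self_eq_zero.1 h0)
  have hv12 : v₁ = v₂ := by
    have := hH₁.symm.trans hH₂
    rw [hp12] at this
    exact add_left_cancel this
  -- conclude Q₁ = Q₂
  have hAA : Q₁ \ P = Q₂ \ P := by
    ext i
    constructor
    · intro hi
      by_contra hni
      have hiR : i ∈ R := hQR₁ (Finset.mem_sdiff.1 hi).1
      have hiP : i ∉ P := (Finset.mem_sdiff.1 hi).2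
      have hiQ₂ : i ∉ Q₂ := fun h => hni (Finset.mem_sdiff.2 ⟨h, hiP⟩)
      have := hpos₂ i (Finset.mem_sdiff.2 ⟨hiR, hiQ₂⟩)
      rw [← hv12, hv₁ i hi] at this
      exact lt_irrefl 0 this
    · intro hi
      by_contra hni
      have hiR : i ∈ R := hQR₂ (Finset.mem_sdiff.1 hi).1
      have hiP : i ∉ P := (Finset.mem_sdiff.1 hi).2
      have hiQ₁ : i ∉ Q₁ := fun h => hni (Finset.mem_sdiff.2 ⟨h, hiP⟩)
      have := hpos₁ i (Finset.mem_sdiff.2 ⟨hiR, hiQ₁⟩)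
      rw [hv12, hv₂ i hi] at this
      exact lt_irrefl 0 this
  calc Q₁ = P ∪ Q₁ \ P := (Finset.union_sdiff_of_subset hPQ₁).symm
    _ = P ∪ Q₂ \ P := by rw [hAA]
    _ = Q₂ := Finset.union_sdiff_of_subset hPQ₂
lemma goodQ_exists (b : Module.Basis I ℝ V) (mu : Finset I → Finset I → I → V)
    (hmu : IsDualSystem (⇑b) mu) {P R : Finset I} (hPR : P ⊆ R) (H : V) :
    ∃ Q : Finset I, GoodQ b mu P R H Q := by
  classical
  set N : Finset I := R \ P with hN
  -- the nonpositive cone on the projected vectors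
  let L : ({ x // x ∈ N } → ℝ) →ₗ[ℝ] V :=
    { toFun := fun c => ∑ i : { x // x ∈ N }, c i • lamProj (⇑b) P ↑i
      map_add' := by
        intro c₁ c₂
        simp [add_smul, Finset.sum_add_distrib]
      map_smul' := by
        intro m c
        simp [smul_smul, Finset.smul_sum] }
  have hLapp : ∀ c, L c = ∑ i : { x // x ∈ N }, c i • lamProj (⇑b) P ↑i := fun _ => rfl
  have hLinj : LinearMap.ker L = ⊥ := by
    rw [LinearMap.ker_eq_bot']
    intro c hc
    exact lamProj_indep b (fun i hi => (Finset.mem_sdiff.1 (hN ▸ hi)).2) c hc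
  set C : Set ({ x // x ∈ N } → ℝ) := { c | ∀ i, c i ≤ 0 } with hC
  have hCclosed : IsClosed C := by
    have : C = ⋂ i, { c : { x // x ∈ N } → ℝ | c i ≤ 0 } := by
      ext c; simp [hC, Set.mem_iInter]
    rw [this]
    exact isClosed_iInter fun i => isClosed_le (continuous_apply i) continuous_const
  have hCconv : Convex ℝ C := by
    intro x hx y hy a b2 ha hb2 hab
    intro i
    have h1 : a * x i ≤ 0 := mul_nonpos_of_nonneg_of_nonpos ha (hx i)
    have h2 : b2 * y i ≤ 0 := mul_nonpos_of_nonneg_of_nonpos hb2 (hy i)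
    simpa using add_nonpos h1 h2
  have hKclosed : IsClosed (L '' C) :=
    (LinearMap.isClosedEmbedding_of_injective hLinj).isClosedMap _ hCclosed
  have hKconv : Convex ℝ (L '' C) := hCconv.linear_image L
  have hKne : (L '' C).Nonempty := ⟨L 0, 0, fun i => le_refl 0, rfl⟩
  obtain ⟨p, hpK, hpmin⟩ :=
    exists_norm_eq_iInf_of_complete_convex hKne hKclosed.isComplete hKconv H
  have hvar := (norm_eq_iInf_iff_real_inner_le_zero hKconv hpK).1 hpmin
  obtain ⟨c, hcC, hcp⟩ := hpK
  set v : V := H - p with hv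
  have hHpv : H = p + v := by rw [hv]; abel
  -- nonnegativity of ⟪e i, v⟫
  have h1 : ∀ i : { x // x ∈ N }, 0 ≤ ⟪lamProj (⇑b) P ↑i, v⟫ := by
    intro i
    have hmem : p - lamProj (⇑b) P ↑i ∈ L '' C := by
      refine ⟨fun j => c j - (if j = i then 1 else 0), ?_, ?_⟩
      · intro j
        by_cases h : j = i
        · subst h
          have := hcC j
          simp only [if_true, eq_self_iff_true]
          simp
          linarith
        · simp only [if_neg h, sub_zero]
          exact hcC j
      · have : (fun j => c j - (if j = i then (1:ℝ) else 0))
            = c - (fun j => if j = i then (1:ℝ) else 0) := rfl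
        rw [this, map_sub, hcp]
        congr 1
        rw [hLapp]
        rw [Finset.sum_eq_single i (fun j _ hj => by simp [hj])
          (fun h => absurd (Finset.mem_univ i) h)]
        simp
    have h2 := hvar _ hmem
    have h3 : p - lamProj (⇑b) P ↑i - p = -lamProj (⇑b) P ↑i := by abel
    rw [h3, inner_neg_right] at h2
    rw [real_inner_comm]
    linarith
  -- complementary slackness
  have hvp : ⟪v, p⟫ = 0 := by
    have ha : p + p ∈ L '' C :=
      ⟨c + c, fun i => add_nonpos (hcC i) (hcC i), by rw [map_add, hcp]⟩
    have hb : (0 : V) ∈ L '' C := ⟨0, fun i => le_refl 0, map_zero L⟩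
    have h2 := hvar _ ha
    have h3 := hvar _ hb
    have e2 : p + p - p = p := by abel
    have e3 : (0 : V) - p = -p := by abel
    rw [e2] at h2
    rw [e3, inner_neg_right] at h3
    linarith
  have hsum : ∑ i : { x // x ∈ N }, c i * ⟪v, lamProj (⇑b) P ↑i⟫ = 0 := by
    rw [← hvp, ← hcp, hLapp, inner_sum]
    exact Finset.sum_congr rfl fun i _ => (real_inner_smul_right _ _ _).symm
  have hterm0 : ∀ i : { x // x ∈ N }, c i * ⟪v, lamProj (⇑b) P ↑i⟫ = 0 := by
    have hnonpos : ∀ i ∈ Finset.univ, c i * ⟪v, lamProj (⇑b) P ↑i⟫ ≤ 0 := by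
      intro i _
      refine mul_nonpos_of_nonpos_of_nonneg (hcC i) ?_
      rw [real_inner_comm]
      exact h1 i
    intro i
    exact (Finset.sum_eq_zero_iff_of_nonpos hnonpos).1 hsum i (Finset.mem_univ i)
  -- define A and Q
  set A : Finset I := N.filter (fun i => ⟪lamProj (⇑b) P i, v⟫ ≤ 0) with hA
  have hA0 : ∀ i ∈ A, ⟪lamProj (⇑b) P i, v⟫ = 0 := by
    intro i hi
    obtain ⟨hiN, hile⟩ := Finset.mem_filter.1 hi
    exact le_antisymm hile (h1 ⟨i, hiN⟩)
  have hApos : ∀ i ∈ N, i ∉ A → 0 < ⟪lamProj (⇑b) P i, v⟫ := by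
    intro i hiN hiA
    by_contra h
    exact hiA (Finset.mem_filter.2 ⟨hiN, le_of_not_gt h⟩)
  have hcA : ∀ i : { x // x ∈ N }, (↑i : I) ∉ A → c i = 0 := by
    intro i hiA
    have hpos := hApos ↑i i.2 hiA
    rcases mul_eq_zero.1 (hterm0 i) with h | h
    · exact h
    · rw [real_inner_comm] at h
      rw [h] at hpos
      exact absurd hpos (lt_irrefl 0)
  set Q : Finset I := P ∪ A with hQ
  have hPQ : P ⊆ Q := Finset.subset_union_left
  have hAR : A ⊆ R := (Finset.filter_subset _ _).trans (hN ▸ Finset.sdiff_subset)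
  have hQR : Q ⊆ R := Finset.union_subset hPR hAR
  have hQP : Q \ P = A := by
    rw [hQ, Finset.union_sdiff_left]
    refine Finset.sdiff_eq_self_of_disjoint ?_
    rw [Finset.disjoint_left]
    intro a haA
    exact (Finset.mem_sdiff.1 (hN ▸ (Finset.filter_subset _ _) haA)).2
  have hvorth : ∀ a ∈ Q \ P, ⟪lamProj (⇑b) P a, v⟫ = 0 := by
    intro a ha; exact hA0 a (hQP ▸ ha)
  have hp_span : p ∈ Submodule.span ℝ (lamProj (⇑b) P '' ↑(Q \ P)) := by
    rw [hQP, ← hcp, hLapp]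
    refine Submodule.sum_mem _ ?_
    intro i _
    by_cases hiA : (↑i : I) ∈ A
    · exact Submodule.smul_mem _ _ (Submodule.subset_span ⟨↑i, by exact_mod_cast hiA, rfl⟩)
    · rw [hcA i hiA, zero_smul]
      exact Submodule.zero_mem _
  refine ⟨Q, hPQ, hQR, ?_, ?_⟩
  · -- mu conditions
    intro a ha
    rw [bridge_mu b mu hmu hPQ ha hHpv hvorth]
    have haA : a ∈ A := hQP ▸ ha
    have haN : a ∈ N := (Finset.filter_subset _ _) haA
    have hval : ⟪mu P Q a, p⟫ = c ⟨a, haN⟩ := by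
      rw [← hcp, hLapp, inner_sum]
      have hterm : ∀ i : { x // x ∈ N },
          ⟪mu P Q a, c i • lamProj (⇑b) P ↑i⟫ = if a = (↑i : I) then c i else 0 := by
        intro i
        rw [real_inner_smul_right]
        by_cases hiA : (↑i : I) ∈ A
        · rw [(hmu P Q hPQ a ha).2 ↑i (hQP ▸ (by exact_mod_cast hiA : (↑i : I) ∈ A))]
          by_cases h : a = (↑i : I) <;> simp [h]
        · rw [hcA i hiA, zero_mul]
          have : a ≠ (↑i : I) := fun h => hiA (h ▸ haA)
          rw [if_neg this]
      rw [Finset.sum_congr rfl fun i _ => hterm i]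
      rw [Finset.sum_eq_single (⟨a, haN⟩ : { x // x ∈ N })
        (fun j _ hj => if_neg fun h => hj (Subtype.ext h.symm))
        (fun h => absurd (Finset.mem_univ _) h)]
      exact if_pos rfl
    rw [hval]
    exact hcC _
  · -- tau conditions
    intro i hi
    rw [bridge_tau b hPQ i hHpv hp_span hvorth]
    obtain ⟨hiR, hiQ⟩ := Finset.mem_sdiff.1 hi
    have hiP : i ∉ P := fun h => hiQ (hPQ h)
    have hiN : i ∈ N := hN ▸ Finset.mem_sdiff.2 ⟨hiR, hiP⟩
    have hiA : i ∉ A := fun h => hiQ (Finset.mem_union_right _ h)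
    exact hApos i hiN hiA

lemma goodQ_existsUnique (b : Module.Basis I ℝ V) (mu : Finset I → Finset I → I → V)
    (hmu : IsDualSystem (⇑b) mu) {P R : Finset I} (hPR : P ⊆ R) (H : V) :
    ∃! Q : Finset I, GoodQ b mu P R H Q := by
  obtain ⟨Q, hQ⟩ := goodQ_exists b mu hmu hPR H
  exact ⟨Q, hQ, fun y hy => goodQ_unique b mu hmu H hy hQ⟩
/-- generalized `θ̂` with an arbitrary sign set `S`. -/
noncomputable def ThetaHatS (mu : Finset I → Finset I → I → V)
    (S : Finset I) (P Q : Finset I) (H : V) : ℤ :=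
  if P ⊆ Q ∧ ∀ i ∈ Q \ P,
      (i ∈ S → 0 < ⟪mu P Q i, H⟫) ∧ (i ∉ S → ⟪mu P Q i, H⟫ ≤ 0)
  then 1 else 0

/-- the characteristic function `τ_Q^R`. -/
noncomputable def tauF (b : Module.Basis I ℝ V) (Q R : Finset I) (H : V) : ℤ :=
  if Q ⊆ R ∧ ∀ i ∈ R \ Q, 0 < ⟪lamProj (⇑b) Q i, H⟫ then 1 else 0

lemma partition_sum (b : Module.Basis I ℝ V) (mu : Finset I → Finset I → I → V)
    (hmu : IsDualSystem (⇑b) mu) {P R : Finset I} (hPR : P ⊆ R) (H : V) :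
    ∑ Q ∈ Finset.Icc P R,
      (-1 : ℤ) ^ (((Q \ P) ∩ (∅ : Finset I)).card) * ThetaHatS mu ∅ P Q H * tauF b Q R H
      = 1 := by
  obtain ⟨Q₀, hQ₀, huniq⟩ := goodQ_existsUnique b mu hmu hPR H
  have hQ₀Icc : Q₀ ∈ Finset.Icc P R := Finset.mem_Icc.2 ⟨hQ₀.1, hQ₀.2.1⟩
  have hterm : ∀ Q ∈ Finset.Icc P R,
      (-1 : ℤ) ^ (((Q \ P) ∩ (∅ : Finset I)).card) * ThetaHatS mu ∅ P Q H * tauF b Q R H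
        = if Q = Q₀ then 1 else 0 := by
    intro Q hQ
    rw [Finset.mem_Icc] at hQ
    rw [Finset.inter_empty, Finset.card_empty, pow_zero, one_mul]
    by_cases h : Q = Q₀
    · subst h
      rw [if_pos rfl, ThetaHatS, if_pos, tauF, if_pos, mul_one]
      · exact ⟨hQ₀.2.1, hQ₀.2.2.2⟩
      · exact ⟨hQ₀.1, fun i hi =>
          ⟨fun hmem => absurd hmem (Finset.notMem_empty i),
           fun _ => hQ₀.2.2.1 i hi⟩⟩
    · rw [if_neg h]
      by_cases h1 : P ⊆ Q ∧ ∀ i ∈ Q \ P,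
          (i ∈ (∅ : Finset I) → 0 < ⟪mu P Q i, H⟫) ∧
          (i ∉ (∅ : Finset I) → ⟪mu P Q i, H⟫ ≤ 0)
      · by_cases h2 : Q ⊆ R ∧ ∀ i ∈ R \ Q, 0 < ⟪lamProj (⇑b) Q i, H⟫
        · exfalso
          refine h (huniq Q ⟨h1.1, h2.1, ?_, h2.2⟩)
          intro i hi
          exact (h1.2 i hi).2 (Finset.notMem_empty i)
        · rw [tauF, if_neg h2, mul_zero]
      · rw [ThetaHatS, if_neg h1, zero_mul]
  rw [Finset.sum_congr rfl hterm, Finset.sum_ite_eq' (Finset.Icc P R) Q₀ (fun _ => (1 : ℤ)),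
    if_pos hQ₀Icc]
lemma gen_sum (b : Module.Basis I ℝ V) (mu : Finset I → Finset I → I → V)
    (hmu : IsDualSystem (⇑b) mu) :
    ∀ n : ℕ, ∀ P R : Finset I, P ⊆ R → (R \ P).card ≤ n →
    ∀ S : Finset I, S ⊆ R \ P → ∀ H : V,
    ∑ Q ∈ Finset.Icc P R,
      (-1 : ℤ) ^ (((Q \ P) ∩ S).card) * ThetaHatS mu S P Q H * tauF b Q R H
      = if S = ∅ then 1 else 0 := by
  intro n
  induction n with
  | zero =>
    intro P R hPR hcard S hS H
    have hRP : R \ P = ∅ := Finset.card_eq_zero.1 (le_antisymm hcard (Nat.zero_le _))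
    have hSe : S = ∅ := Finset.subset_empty.1 (hRP ▸ hS)
    subst hSe
    rw [if_pos rfl]
    exact partition_sum b mu hmu hPR H
  | succ n ihn =>
    intro P R hPR hcard
    suffices h : ∀ m : ℕ, ∀ S : Finset I, S.card ≤ m → S ⊆ R \ P → ∀ H : V,
        ∑ Q ∈ Finset.Icc P R,
          (-1 : ℤ) ^ (((Q \ P) ∩ S).card) * ThetaHatS mu S P Q H * tauF b Q R H
          = if S = ∅ then 1 else 0 by
      intro S hS H
      exact h S.card S le_rfl hS H
    intro m
    induction m with
    | zero =>
      intro S hScard hS H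
      have hSe : S = ∅ := Finset.card_eq_zero.1 (le_antisymm hScard (Nat.zero_le _))
      subst hSe
      rw [if_pos rfl]
      exact partition_sum b mu hmu hPR H
    | succ m ihm =>
      intro S hScard hS H
      by_cases hSe : S = ∅
      · subst hSe
        rw [if_pos rfl]
        exact partition_sum b mu hmu hPR H
      rw [if_neg hSe]
      obtain ⟨s, hsS⟩ := Finset.nonempty_iff_ne_empty.2 hSe
      set P' : Finset I := insert s P with hP'def
      set S' : Finset I := S.erase s with hS'def
      have hsRP : s ∈ R \ P := hS hsS
      obtain ⟨hsR, hsP⟩ := Finset.mem_sdiff.1 hsRP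
      have hP'R : P' ⊆ R := Finset.insert_subset hsR hPR
      have hS'sub : S' ⊆ R \ P' := by
        intro t ht
        obtain ⟨hts, htS⟩ := Finset.mem_erase.1 ht
        obtain ⟨htR, htP⟩ := Finset.mem_sdiff.1 (hS htS)
        refine Finset.mem_sdiff.2 ⟨htR, fun hmem => ?_⟩
        rcases Finset.mem_insert.1 hmem with h | h
        · exact hts h
        · exact htP h
      have hS'RP : S' ⊆ R \ P := (Finset.erase_subset s S).trans hS
      have hcard' : (R \ P').card ≤ n := by
        rw [hP'def, Finset.sdiff_insert, Finset.card_erase_of_mem hsRP]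
        omega
      have hS'card : S'.card ≤ m := by
        rw [hS'def, Finset.card_erase_of_mem hsS]
        omega
      have hfilter : (Finset.Icc P R).filter (fun Q => s ∈ Q) = Finset.Icc P' R := by
        ext Q
        simp only [Finset.mem_filter, Finset.mem_Icc, Finset.le_eq_subset, hP'def,
          Finset.insert_subset_iff]
        tauto
      -- termwise facts for Q containing s
      have hQfacts : ∀ Q ∈ Finset.Icc P' R,
          (-1 : ℤ) ^ (((Q \ P) ∩ S).card) * ThetaHatS mu S P Q H * tauF b Q R H
          = (-1 : ℤ) ^ (((Q \ P) ∩ S').card) * ThetaHatS mu S' P Q H * tauF b Q R H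
            - (-1 : ℤ) ^ (((Q \ P') ∩ S').card) * ThetaHatS mu S' P' Q H * tauF b Q R H := by
        intro Q hQ
        have hP'Q : P' ⊆ Q := (Finset.mem_Icc.1 hQ).1
        have hQR : Q ⊆ R := (Finset.mem_Icc.1 hQ).2
        have hPQ : P ⊆ Q := (Finset.subset_insert s P).trans hP'Q
        have hsQ : s ∈ Q := hP'Q (Finset.mem_insert_self s P)
        have hsQP : s ∈ Q \ P := Finset.mem_sdiff.2 ⟨hsQ, hsP⟩
        have hmueq : ∀ i ∈ Q \ P', mu P' Q i = mu P Q i := by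
          intro i hi
          exact mu_insert b mu hmu hPQ hsQ hsP hi
        have hQP'mem : ∀ {i : I}, i ∈ Q \ P' ↔ (i ∈ Q \ P ∧ i ≠ s) := by
          intro i
          constructor
          · intro hi
            obtain ⟨hiQ, hiP'⟩ := Finset.mem_sdiff.1 hi
            have his : i ≠ s := fun h => hiP' (h ▸ Finset.mem_insert_self s P)
            exact ⟨Finset.mem_sdiff.2 ⟨hiQ, fun h => hiP' (Finset.mem_insert_of_mem h)⟩, his⟩
          · rintro ⟨hi, his⟩
            obtain ⟨hiQ, hiP⟩ := Finset.mem_sdiff.1 hi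
            refine Finset.mem_sdiff.2 ⟨hiQ, fun hmem => ?_⟩
            rcases Finset.mem_insert.1 hmem with h | h
            · exact his h
            · exact hiP h
        -- sign identities
        have hset1 : (Q \ P) ∩ S = insert s ((Q \ P') ∩ S') := by
          ext t
          simp only [Finset.mem_inter, Finset.mem_insert]
          constructor
          · rintro ⟨htQP, htS⟩
            by_cases hts : t = s
            · exact Or.inl hts
            · exact Or.inr ⟨hQP'mem.2 ⟨htQP, hts⟩, Finset.mem_erase.2 ⟨hts, htS⟩⟩
          · rintro (rfl | ⟨htQP', htS'⟩)
            · exact ⟨hsQP, hsS⟩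
            · exact ⟨(hQP'mem.1 htQP').1, (Finset.mem_erase.1 htS').2⟩
        have hsign1 : ((Q \ P) ∩ S).card = ((Q \ P') ∩ S').card + 1 := by
          rw [hset1, Finset.card_insert_of_notMem]
          intro hmem
          exact (Finset.mem_erase.1 (Finset.mem_inter.1 hmem).2).1 rfl
        have hset2 : (Q \ P) ∩ S' = (Q \ P') ∩ S' := by
          ext t
          simp only [Finset.mem_inter]
          constructor
          · rintro ⟨htQP, htS'⟩
            exact ⟨hQP'mem.2 ⟨htQP, (Finset.mem_erase.1 htS').1⟩, htS'⟩
          · rintro ⟨htQP', htS'⟩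
            exact ⟨(hQP'mem.1 htQP').1, htS'⟩
        -- theta factorizations
        have hTheta1 : ThetaHatS mu S P Q H
            = ThetaHatS mu S' P' Q H * (if 0 < ⟪mu P Q s, H⟫ then 1 else 0) := by
          rw [ThetaHatS, ThetaHatS]
          by_cases hms : 0 < ⟪mu P Q s, H⟫
          · rw [if_pos hms, mul_one]
            congr 1
            apply propext
            constructor
            · rintro ⟨-, hall⟩
              refine ⟨hP'Q, fun i hi => ?_⟩
              have hi' := hQP'mem.1 hi
              have := hall i hi'.1
              rw [hmueq i hi]
              constructor
              · intro hiS'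
                exact this.1 (Finset.mem_erase.1 hiS').2
              · intro hiS'
                refine this.2 (fun hiS => hiS' (Finset.mem_erase.2 ⟨hi'.2, hiS⟩))
            · rintro ⟨-, hall⟩
              refine ⟨hPQ, fun i hi => ?_⟩
              by_cases his : i = s
              · subst his
                exact ⟨fun _ => hms, fun hnot => absurd hsS hnot⟩
              · have hi' : i ∈ Q \ P' := hQP'mem.2 ⟨hi, his⟩
                have := hall i hi'
                rw [hmueq i hi'] at this
                constructor
                · intro hiS
                  exact this.1 (Finset.mem_erase.2 ⟨his, hiS⟩)
                · intro hiS
                  exact this.2 (fun hiS' => hiS (Finset.mem_erase.1 hiS').2)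
          · rw [if_neg hms, mul_zero]
            rw [if_neg]
            rintro ⟨-, hall⟩
            exact hms ((hall s hsQP).1 hsS)
        have hTheta2 : ThetaHatS mu S' P Q H
            = ThetaHatS mu S' P' Q H * (if ⟪mu P Q s, H⟫ ≤ 0 then 1 else 0) := by
          rw [ThetaHatS, ThetaHatS]
          by_cases hms : ⟪mu P Q s, H⟫ ≤ 0
          · rw [if_pos hms, mul_one]
            congr 1
            apply propext
            constructor
            · rintro ⟨-, hall⟩
              refine ⟨hP'Q, fun i hi => ?_⟩
              have hi' := hQP'mem.1 hi
              have := hall i hi'.1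
              rw [hmueq i hi]
              exact this
            · rintro ⟨-, hall⟩
              refine ⟨hPQ, fun i hi => ?_⟩
              by_cases his : i = s
              · subst his
                refine ⟨fun hiS' => absurd rfl (Finset.mem_erase.1 hiS').1,
                  fun _ => hms⟩
              · have hi' : i ∈ Q \ P' := hQP'mem.2 ⟨hi, his⟩
                have := hall i hi'
                rw [hmueq i hi'] at this
                exact this
          · rw [if_neg hms, mul_zero]
            rw [if_neg]
            rintro ⟨-, hall⟩
            exact hms ((hall s hsQP).2 (fun hS' => (Finset.mem_erase.1 hS').1 rfl))
        -- combine
        rw [hsign1, hTheta1, hTheta2, hset2]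
        by_cases hms : ⟪mu P Q s, H⟫ ≤ 0
        · rw [if_pos hms, if_neg (not_lt.2 hms)]
          ring
        · rw [if_neg hms, if_pos (lt_of_not_ge hms)]
          ring
      have hQfacts2 : ∀ Q ∈ (Finset.Icc P R).filter (fun Q => ¬ s ∈ Q),
          (-1 : ℤ) ^ (((Q \ P) ∩ S).card) * ThetaHatS mu S P Q H * tauF b Q R H
          = (-1 : ℤ) ^ (((Q \ P) ∩ S').card) * ThetaHatS mu S' P Q H * tauF b Q R H := by
        intro Q hQ
        obtain ⟨hQIcc, hsQ⟩ := Finset.mem_filter.1 hQ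
        have hnotin : ∀ {i : I}, i ∈ Q \ P → i ≠ s := by
          intro i hi h
          exact hsQ (h ▸ (Finset.mem_sdiff.1 hi).1)
        have hset : (Q \ P) ∩ S = (Q \ P) ∩ S' := by
          ext t
          simp only [Finset.mem_inter]
          constructor
          · rintro ⟨htQP, htS⟩
            exact ⟨htQP, Finset.mem_erase.2 ⟨hnotin htQP, htS⟩⟩
          · rintro ⟨htQP, htS'⟩
            exact ⟨htQP, (Finset.mem_erase.1 htS').2⟩
        have hTheta : ThetaHatS mu S P Q H = ThetaHatS mu S' P Q H := by
          rw [ThetaHatS, ThetaHatS]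
          congr 1
          apply propext
          constructor
          · rintro ⟨h1, hall⟩
            refine ⟨h1, fun i hi => ?_⟩
            have := hall i hi
            constructor
            · intro hiS'
              exact this.1 (Finset.mem_erase.1 hiS').2
            · intro hiS'
              exact this.2 (fun hiS => hiS' (Finset.mem_erase.2 ⟨hnotin hi, hiS⟩))
          · rintro ⟨h1, hall⟩
            refine ⟨h1, fun i hi => ?_⟩
            have := hall i hi
            constructor
            · intro hiS
              exact this.1 (Finset.mem_erase.2 ⟨hnotin hi, hiS⟩)
            · intro hiS
              exact this.2 (fun hiS' => hiS (Finset.mem_erase.1 hiS').2)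
        rw [hset, hTheta]
      -- now assemble
      have hsplitS : ∑ Q ∈ Finset.Icc P R,
            (-1 : ℤ) ^ (((Q \ P) ∩ S).card) * ThetaHatS mu S P Q H * tauF b Q R H
          = ∑ Q ∈ Finset.Icc P' R,
              ((-1 : ℤ) ^ (((Q \ P) ∩ S').card) * ThetaHatS mu S' P Q H * tauF b Q R H
              - (-1 : ℤ) ^ (((Q \ P') ∩ S').card) * ThetaHatS mu S' P' Q H * tauF b Q R H)
            + ∑ Q ∈ (Finset.Icc P R).filter (fun Q => ¬ s ∈ Q),
              (-1 : ℤ) ^ (((Q \ P) ∩ S').card) * ThetaHatS mu S' P Q H * tauF b Q R H := by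
        rw [← Finset.sum_filter_add_sum_filter_not (Finset.Icc P R) (fun Q => s ∈ Q)]
        rw [hfilter]
        rw [Finset.sum_congr rfl hQfacts, Finset.sum_congr rfl hQfacts2]
      rw [hsplitS, Finset.sum_sub_distrib]
      have hback : ∑ Q ∈ Finset.Icc P' R,
            (-1 : ℤ) ^ (((Q \ P) ∩ S').card) * ThetaHatS mu S' P Q H * tauF b Q R H
          + ∑ Q ∈ (Finset.Icc P R).filter (fun Q => ¬ s ∈ Q),
            (-1 : ℤ) ^ (((Q \ P) ∩ S').card) * ThetaHatS mu S' P Q H * tauF b Q R H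
          = ∑ Q ∈ Finset.Icc P R,
            (-1 : ℤ) ^ (((Q \ P) ∩ S').card) * ThetaHatS mu S' P Q H * tauF b Q R H := by
        rw [← hfilter]
        exact Finset.sum_filter_add_sum_filter_not (Finset.Icc P R) (fun Q => s ∈ Q) _
      have hS'val : ∑ Q ∈ Finset.Icc P R,
            (-1 : ℤ) ^ (((Q \ P) ∩ S').card) * ThetaHatS mu S' P Q H * tauF b Q R H
          = if S' = ∅ then 1 else 0 := ihm S' hS'card hS'RP H
      have hEval : ∑ Q ∈ Finset.Icc P' R,
            (-1 : ℤ) ^ (((Q \ P') ∩ S').card) * ThetaHatS mu S' P' Q H * tauF b Q R H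
          = if S' = ∅ then 1 else 0 := ihn P' R hP'R hcard' S' hS'sub H
      have : ∑ Q ∈ Finset.Icc P' R,
            (-1 : ℤ) ^ (((Q \ P) ∩ S').card) * ThetaHatS mu S' P Q H * tauF b Q R H
          = (if S' = ∅ then 1 else 0)
          - ∑ Q ∈ (Finset.Icc P R).filter (fun Q => ¬ s ∈ Q),
            (-1 : ℤ) ^ (((Q \ P) ∩ S').card) * ThetaHatS mu S' P Q H * tauF b Q R H := by
        rw [← hS'val, ← hback]
        ring
      rw [this, hEval]
      ring
end Aux

/-- Corollary 3.6:
`Σ_{P ⊆ Q ⊆ R} (−1)^{b̂_{P,Q}^Λ} θ̂_{P,Q}^Λ(H) τ_Q^R(H) = d_{Δ_P^R}(Λ)`. -/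
theorem langlands_corollary_3_6
    (b : Module.Basis I ℝ V) (mu : Finset I → Finset I → I → V) (hmu : IsDualSystem (⇑b) mu)
    (Λ : V) (P R : Finset I) (hPR : P ⊆ R) (H : V) :
    ∑ Q ∈ Finset.Icc P R,
        (-1 : ℤ) ^ (bhatcard (⇑b) Λ P Q) * thetaHat (⇑b) mu Λ P Q H * theta (⇑b) mu 0 Q R H
      = if ∀ i ∈ R \ P, 0 < ⟪lamProj (⇑b) P i, Λ⟫ then 1 else 0 := by
  classical
  set S : Finset I := (R \ P).filter (fun i => ⟪lamProj (⇑b) P i, Λ⟫ ≤ 0) with hSdef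
  have hSsub : S ⊆ R \ P := Finset.filter_subset _ _
  have hgen := gen_sum b mu hmu (R \ P).card P R hPR le_rfl S hSsub H
  have hterm : ∀ Q ∈ Finset.Icc P R,
      (-1 : ℤ) ^ (bhatcard (⇑b) Λ P Q) * thetaHat (⇑b) mu Λ P Q H * theta (⇑b) mu 0 Q R H
      = (-1 : ℤ) ^ (((Q \ P) ∩ S).card) * ThetaHatS mu S P Q H * tauF b Q R H := by
    intro Q hQ
    have hPQ : P ⊆ Q := (Finset.mem_Icc.1 hQ).1
    have hQR : Q ⊆ R := (Finset.mem_Icc.1 hQ).2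
    have hQPsub : Q \ P ⊆ R \ P := by
      intro t ht
      obtain ⟨h1, h2⟩ := Finset.mem_sdiff.1 ht
      exact Finset.mem_sdiff.2 ⟨hQR h1, h2⟩
    have hb : bhatcard (⇑b) Λ P Q = ((Q \ P) ∩ S).card := by
      rw [bhatcard]
      congr 1
      ext t
      rw [Finset.mem_filter, Finset.mem_inter, hSdef, Finset.mem_filter]
      constructor
      · rintro ⟨ht, hle⟩
        exact ⟨ht, hQPsub ht, hle⟩
      · rintro ⟨ht, -, hle⟩
        exact ⟨ht, hle⟩
    have hth : thetaHat (⇑b) mu Λ P Q H = ThetaHatS mu S P Q H := by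
      rw [thetaHat, ThetaHatS]
      congr 1
      apply propext
      refine and_congr_right fun _ => ?_
      refine forall_congr' fun i => forall_congr' fun hi => ?_
      have hiS : i ∈ S ↔ ⟪lamProj (⇑b) P i, Λ⟫ ≤ 0 := by
        rw [hSdef, Finset.mem_filter]
        exact ⟨fun h => h.2, fun h => ⟨hQPsub hi, h⟩⟩
      by_cases hl : ⟪lamProj (⇑b) P i, Λ⟫ ≤ 0
      · constructor
        · rintro ⟨-, h2⟩
          exact ⟨fun _ => h2 hl, fun hns => absurd (hiS.2 hl) hns⟩
        · rintro ⟨h1, -⟩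
          exact ⟨fun hpos => absurd hl (not_le.2 hpos), fun _ => h1 (hiS.2 hl)⟩
      · have hpos := lt_of_not_ge hl
        constructor
        · rintro ⟨h1, -⟩
          exact ⟨fun hmem => absurd (hiS.1 hmem) hl, fun _ => h1 hpos⟩
        · rintro ⟨-, h2⟩
          exact ⟨fun _ => h2 (fun hmem => hl (hiS.1 hmem)), fun hle => absurd hle hl⟩
    have htz : theta (⇑b) mu 0 Q R H = tauF b Q R H := by
      rw [theta, tauF]
      congr 1
      apply propext
      refine and_congr_right fun _ => ?_
      refine forall_congr' fun i => forall_congr' fun hi => ?_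
      rw [inner_zero_right]
      constructor
      · rintro ⟨-, h2⟩
        exact h2 le_rfl
      · intro h
        exact ⟨fun habs => absurd habs (lt_irrefl 0), fun _ => h⟩
    rw [hb, hth, htz]
  rw [Finset.sum_congr rfl hterm, hgen]
  have : S = ∅ ↔ ∀ i ∈ R \ P, 0 < ⟪lamProj (⇑b) P i, Λ⟫ := by
    rw [hSdef, Finset.filter_eq_empty_iff]
    constructor
    · intro h i hi
      exact lt_of_not_ge (h hi)
    · intro h i hi
      exact not_le.2 (h i hi)
  by_cases h : S = ∅
  · rw [if_pos h, if_pos (this.1 h)]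
  · rw [if_neg h, if_neg (fun hc => h (this.2 hc))]
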